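/- Suppose θ₁, θ₂, θ₃: ℝ → ℝ are differentiable with θ₂(t) ≠ ±π/4, (θ₁(t₀),θ₂(t₀),θ₃(t₀)) = (0,0,0), and satisfy the system θ₁' = a₁ + sin(2θ₁)tan(2θ₂)a₂ − cos(2θ₁)tan(2θ₂)a₃, θ₂' = cos(2θ₁)a₂ + sin(2θ₁)a₃, θ₃' = −(sin(2θ₁)/cos(2θ₂))a₂ + (cos(2θ₁)/cos(2θ₂))a₃. Then q(t) := exp(iθ₁(t))exp(jθ₂(t))exp(kθ₃(t)) satisfies q'(t) = (a₁(t)i + a₂(t)j + a₃(t)k)q(t) with q(t₀) = 1. -/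

import Mathlib

noncomputable def qi : Quaternion ℝ := ⟨0, 1, 0, 0⟩
noncomputable def qj : Quaternion ℝ := ⟨0, 0, 1, 0⟩
noncomputable def qk : Quaternion ℝ := ⟨0, 0, 0, 1⟩

noncomputable def expI (θ : ℝ) : Quaternion ℝ := ⟨Real.cos θ, Real.sin θ, 0, 0⟩
noncomputable def expJ (θ : ℝ) : Quaternion ℝ := ⟨Real.cos θ, 0, Real.sin θ, 0⟩
noncomputable def expK (θ : ℝ) : Quaternion ℝ := ⟨Real.cos θ, 0, 0, Real.sin θ⟩

/-!
Differentiating `q = e^{iθ₁} e^{jθ₂} e^{kθ₃}` by the product rule, with `(e^{uθ})' = θ' u e^{uθ}`,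
gives `q' = ω q` for `ω = θ₁' i + θ₂' e^{iθ₁} j e^{-iθ₁} + θ₃' e^{iθ₁} e^{jθ₂} k e^{-jθ₂} e^{-iθ₁}`.
Conjugation by `e^{uθ}` rotates the orthogonal plane by `2θ`, e.g. `e^{iθ} j = (cos 2θ j + sin 2θ k) e^{iθ}`,
so the coefficients of `ω` are linear combinations of `θ₁', θ₂', θ₃'` in the double angles; the
system is exactly the inversion of this relation, which makes `ω = a₁ i + a₂ j + a₃ k`.
The inversion divides by `cos 2θ₂`, which never vanishes: `θ₂` starts at `0` and, being continuous
and never equal to `±π/4`, stays in `(-π/4, π/4)`.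
-/

open Real Set
open scoped Quaternion

theorem Continuous.mem_Ioo_of_forall_ne {X α : Type*} [TopologicalSpace X] [PreconnectedSpace X]
    [TopologicalSpace α] [LinearOrder α] [OrderClosedTopology α] {f : X → α} (hf : Continuous f)
    {a b : α} {x₀ : X} (h₀ : f x₀ ∈ Ioo a b) (ha : ∀ x, f x ≠ a) (hb : ∀ x, f x ≠ b) (x : X) :
    f x ∈ Ioo a b := by
  have hclosed : f ⁻¹' Ioo a b = f ⁻¹' Icc a b := by
    ext y
    simp only [mem_preimage, mem_Ioo, mem_Icc, le_iff_lt_or_eq, (ha y).symm, hb y, or_false]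
  have hclopen : IsClopen (f ⁻¹' Ioo a b) :=
    ⟨hclosed ▸ isClosed_Icc.preimage hf, isOpen_Ioo.preimage hf⟩
  exact eq_univ_iff_forall.mp (hclopen.eq_univ ⟨x₀, h₀⟩) x

theorem HasDerivAt.cos_smul_one_add_sin_smul {A : Type*} [NormedRing A] [NormedAlgebra ℝ A]
    {u : A} (hu : u * u = -1) {f : ℝ → ℝ} {f' t : ℝ} (hf : HasDerivAt f f' t) :
    HasDerivAt (fun s => Real.cos (f s) • (1 : A) + Real.sin (f s) • u)
      (f' • (u * (Real.cos (f t) • (1 : A) + Real.sin (f t) • u))) t := by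
  refine ((hf.cos.smul_const (1 : A)).add (hf.sin.smul_const u)).congr_deriv ?_
  simp only [mul_add, mul_smul_comm, mul_one, hu, smul_neg, smul_add, smul_smul]
  module

theorem qi_mul_qi : qi * qi = -1 := by
  ext <;> simp [Quaternion.re_mul, Quaternion.imI_mul, Quaternion.imJ_mul, Quaternion.imK_mul] <;>
    simp [qi]

theorem qj_mul_qj : qj * qj = -1 := by
  ext <;> simp [Quaternion.re_mul, Quaternion.imI_mul, Quaternion.imJ_mul, Quaternion.imK_mul] <;>
    simp [qj]

theorem qk_mul_qk : qk * qk = -1 := by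
  ext <;> simp [Quaternion.re_mul, Quaternion.imI_mul, Quaternion.imJ_mul, Quaternion.imK_mul] <;>
    simp [qk]

theorem expI_eq (θ : ℝ) : expI θ = cos θ • 1 + sin θ • qi := by ext <;> simp <;> simp [expI, qi]

theorem expJ_eq (θ : ℝ) : expJ θ = cos θ • 1 + sin θ • qj := by ext <;> simp <;> simp [expJ, qj]

theorem expK_eq (θ : ℝ) : expK θ = cos θ • 1 + sin θ • qk := by ext <;> simp <;> simp [expK, qk]

section
variable {θ : ℝ → ℝ} {θ' t : ℝ}

theorem HasDerivAt.expI (h : HasDerivAt θ θ' t) :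
    HasDerivAt (fun s => expI (θ s)) (θ' • (qi * expI (θ t))) t := by
  simpa only [expI_eq] using h.cos_smul_one_add_sin_smul qi_mul_qi

theorem HasDerivAt.expJ (h : HasDerivAt θ θ' t) :
    HasDerivAt (fun s => expJ (θ s)) (θ' • (qj * expJ (θ t))) t := by
  simpa only [expJ_eq] using h.cos_smul_one_add_sin_smul qj_mul_qj

theorem HasDerivAt.expK (h : HasDerivAt θ θ' t) :
    HasDerivAt (fun s => expK (θ s)) (θ' • (qk * expK (θ t))) t := by
  simpa only [expK_eq] using h.cos_smul_one_add_sin_smul qk_mul_qk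

end

theorem expI_mul_qi (θ : ℝ) : expI θ * qi = qi * expI θ := by
  ext <;> simp [Quaternion.re_mul, Quaternion.imI_mul, Quaternion.imJ_mul, Quaternion.imK_mul] <;>
    simp [expI, qi]

theorem expI_mul_qj (θ : ℝ) : expI θ * qj = (cos (2 * θ) • qj + sin (2 * θ) • qk) * expI θ := by
  ext <;> simp [Quaternion.re_mul, Quaternion.imI_mul, Quaternion.imJ_mul, Quaternion.imK_mul] <;>
    simp [expI, qj, qk, cos_two_mul, sin_two_mul] <;> grind [sin_sq_add_cos_sq]

theorem expI_mul_qk (θ : ℝ) : expI θ * qk = (cos (2 * θ) • qk - sin (2 * θ) • qj) * expI θ := by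
  ext <;> simp [Quaternion.re_mul, Quaternion.imI_mul, Quaternion.imJ_mul, Quaternion.imK_mul] <;>
    simp [expI, qj, qk, cos_two_mul, sin_two_mul] <;> grind [sin_sq_add_cos_sq]

theorem expJ_mul_qk (θ : ℝ) : expJ θ * qk = (cos (2 * θ) • qk + sin (2 * θ) • qi) * expJ θ := by
  ext <;> simp [Quaternion.re_mul, Quaternion.imI_mul, Quaternion.imJ_mul, Quaternion.imK_mul] <;>
    simp [expJ, qi, qk, cos_two_mul, sin_two_mul] <;> grind [sin_sq_add_cos_sq]

theorem euler_product_deriv_eq (α β γ d₁ d₂ d₃ : ℝ) :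
    (d₁ • (qi * expI α) * expJ β + expI α * (d₂ • (qj * expJ β))) * expK γ +
        expI α * expJ β * (d₃ • (qk * expK γ)) =
      ((d₁ + sin (2 * β) * d₃) • qi +
          (cos (2 * α) * d₂ - sin (2 * α) * cos (2 * β) * d₃) • qj +
          (sin (2 * α) * d₂ + cos (2 * α) * cos (2 * β) * d₃) • qk) *
        (expI α * expJ β * expK γ) := by
  have hj : expI α * (qj * (expJ β * expK γ)) =
      (cos (2 * α) • qj + sin (2 * α) • qk) * (expI α * (expJ β * expK γ)) := by
    rw [← mul_assoc, expI_mul_qj, mul_assoc]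
  have hk : expI α * (expJ β * (qk * expK γ)) =
      (cos (2 * β) • (cos (2 * α) • qk - sin (2 * α) • qj) + sin (2 * β) • qi) *
        (expI α * (expJ β * expK γ)) := by
    rw [← mul_assoc (expJ β), expJ_mul_qk, ← mul_assoc, ← mul_assoc, mul_add, mul_smul_comm,
      mul_smul_comm, expI_mul_qk, expI_mul_qi]
    simp only [mul_assoc, smul_mul_assoc, add_mul]
  simp only [mul_assoc, mul_smul_comm, smul_mul_assoc, add_mul, sub_mul, hj, hk]
  module

theorem hasDerivAt_expI_mul_expJ_mul_expK {θ₁ θ₂ θ₃ : ℝ → ℝ} {d₁ d₂ d₃ t : ℝ}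
    (h₁ : HasDerivAt θ₁ d₁ t) (h₂ : HasDerivAt θ₂ d₂ t) (h₃ : HasDerivAt θ₃ d₃ t) :
    HasDerivAt (fun s => expI (θ₁ s) * expJ (θ₂ s) * expK (θ₃ s))
      (((d₁ + sin (2 * θ₂ t) * d₃) • qi +
          (cos (2 * θ₁ t) * d₂ - sin (2 * θ₁ t) * cos (2 * θ₂ t) * d₃) • qj +
          (sin (2 * θ₁ t) * d₂ + cos (2 * θ₁ t) * cos (2 * θ₂ t) * d₃) • qk) *
        (expI (θ₁ t) * expJ (θ₂ t) * expK (θ₃ t))) t :=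
  ((h₁.expI.mul h₂.expJ).mul h₃.expK).congr_deriv (euler_product_deriv_eq _ _ _ _ _ _)

theorem decisive_system_gives_solution_general
    (t₀ : ℝ) (a₁ a₂ a₃ θ₁ θ₂ θ₃ : ℝ → ℝ)
    (hθ₂ne : ∀ t, θ₂ t ≠ Real.pi / 4 ∧ θ₂ t ≠ -(Real.pi / 4))
    (h₁ : ∀ t, HasDerivAt θ₁
      (a₁ t + Real.sin (2 * θ₁ t) * Real.tan (2 * θ₂ t) * a₂ t -
        Real.cos (2 * θ₁ t) * Real.tan (2 * θ₂ t) * a₃ t) t)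
    (h₂ : ∀ t, HasDerivAt θ₂
      (Real.cos (2 * θ₁ t) * a₂ t + Real.sin (2 * θ₁ t) * a₃ t) t)
    (h₃ : ∀ t, HasDerivAt θ₃
      (-(Real.sin (2 * θ₁ t) / Real.cos (2 * θ₂ t)) * a₂ t +
        Real.cos (2 * θ₁ t) / Real.cos (2 * θ₂ t) * a₃ t) t)
    (hinit : θ₁ t₀ = 0 ∧ θ₂ t₀ = 0 ∧ θ₃ t₀ = 0) :
    (∀ t, HasDerivAt (fun s => expI (θ₁ s) * expJ (θ₂ s) * expK (θ₃ s))
        ((a₁ t • qi + a₂ t • qj + a₃ t • qk) *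
          (expI (θ₁ t) * expJ (θ₂ t) * expK (θ₃ t))) t) ∧
      expI (θ₁ t₀) * expJ (θ₂ t₀) * expK (θ₃ t₀) = 1 := by
  obtain ⟨hθ₁₀, hθ₂₀, hθ₃₀⟩ := hinit
  have hθ₂_mem (t : ℝ) : θ₂ t ∈ Ioo (-(π / 4)) (π / 4) :=
    (continuous_iff_continuousAt.2 fun s => (h₂ s).continuousAt).mem_Ioo_of_forall_ne
      (by rw [hθ₂₀]; constructor <;> linarith [pi_pos]) (fun s => (hθ₂ne s).2)
      (fun s => (hθ₂ne s).1) t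
  refine ⟨fun t => ?_, by simp [hθ₁₀, hθ₂₀, hθ₃₀, expI_eq, expJ_eq, expK_eq]⟩
  have hcos : cos (2 * θ₂ t) ≠ 0 :=
    (cos_pos_of_mem_Ioo ⟨by linarith [(hθ₂_mem t).1], by linarith [(hθ₂_mem t).2]⟩).ne'
  refine (hasDerivAt_expI_mul_expJ_mul_expK (h₁ t) (h₂ t) (h₃ t)).congr_deriv ?_
  have hpyth := sin_sq_add_cos_sq (2 * θ₁ t)
  simp only [tan_eq_sin_div_cos]
  congr 1
  match_scalars <;> field_simp
  · ring
  · linear_combination a₂ t * hpyth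
  · linear_combination a₃ t * hpyth

theorem decisive_system_gives_solution
    (t₀ : ℝ) (a₁ a₂ a₃ θ₁ θ₂ θ₃ : ℝ → ℝ)
    (ha₁ : Continuous a₁) (ha₂ : Continuous a₂) (ha₃ : Continuous a₃)
    (hθ₂ne : ∀ t, θ₂ t ≠ Real.pi / 4 ∧ θ₂ t ≠ -(Real.pi / 4))
    (h₁ : ∀ t, HasDerivAt θ₁
      (a₁ t + Real.sin (2 * θ₁ t) * Real.tan (2 * θ₂ t) * a₂ t -
        Real.cos (2 * θ₁ t) * Real.tan (2 * θ₂ t) * a₃ t) t)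
    (h₂ : ∀ t, HasDerivAt θ₂
      (Real.cos (2 * θ₁ t) * a₂ t + Real.sin (2 * θ₁ t) * a₃ t) t)
    (h₃ : ∀ t, HasDerivAt θ₃
      (-(Real.sin (2 * θ₁ t) / Real.cos (2 * θ₂ t)) * a₂ t +
        Real.cos (2 * θ₁ t) / Real.cos (2 * θ₂ t) * a₃ t) t)
    (hinit : θ₁ t₀ = 0 ∧ θ₂ t₀ = 0 ∧ θ₃ t₀ = 0) :
    (∀ t, HasDerivAt (fun s => expI (θ₁ s) * expJ (θ₂ s) * expK (θ₃ s))
        ((a₁ t • qi + a₂ t • qj + a₃ t • qk) *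
          (expI (θ₁ t) * expJ (θ₂ t) * expK (θ₃ t))) t) ∧
      expI (θ₁ t₀) * expJ (θ₂ t₀) * expK (θ₃ t₀) = 1 :=
  decisive_system_gives_solution_general t₀ a₁ a₂ a₃ θ₁ θ₂ θ₃ hθ₂ne h₁ h₂ h₃ hinit
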